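/- For all integers m ≥ 0 and n ≥ 0, the hyperharmonic numbers satisfy H_n^{(m+1)} = C(n+m, m) · (H_{n+m} - H_m), as an identity of rational numbers. -/
import Mathlib


/-- The hyperharmonic numbers `H_n^{(r)}` of Conway and Guy:
`H_0^{(r)} = 0` for all `r ≥ 0`, `H_n^{(0)} = 1/n` for `n ≥ 1`, and
`H_n^{(r)} = ∑_{k=1}^{n} H_k^{(r-1)}` for `n, r ≥ 1`. -/
def hyperharmonic : ℕ → ℕ → ℚ
  | 0, n => if n = 0 then 0 else (n : ℚ)⁻¹
  | r + 1, n => ∑ k ∈ Finset.Icc 1 n, hyperharmonic r k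

lemma hyperharmonic_succ (r n : ℕ) :
    hyperharmonic (r + 1) (n + 1) = hyperharmonic (r + 1) n + hyperharmonic r (n + 1) := by
  show (∑ k ∈ Finset.Icc 1 (n + 1), hyperharmonic r k) = _
  rw [Finset.sum_Icc_succ_top (by omega)]
  rfl

/-- For all integers `m, n ≥ 0`,
`H_n^{(m+1)} = C(n+m, m) ⬝ (H_{n+m} - H_m)` as rational numbers. -/
theorem hyperharmonic_eq_choose_mul (m n : ℕ) :
    hyperharmonic (m + 1) n = ((n + m).choose m : ℚ) * (harmonic (n + m) - harmonic m) := by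
  induction m generalizing n with
  | zero =>
    simp only [Nat.add_zero, Nat.choose_zero_right, Nat.cast_one, one_mul, harmonic_zero,
      sub_zero]
    induction n with
    | zero => simp [hyperharmonic]
    | succ n ih =>
      rw [hyperharmonic_succ, ih, harmonic_succ]
      simp [hyperharmonic]
  | succ m ihm =>
    induction n with
    | zero => simp [hyperharmonic]
    | succ n ihn =>
      rw [hyperharmonic_succ, ihn, ihm]
      simp only [show n + (m + 1) = n + m + 1 from by omega,
        show n + 1 + m = n + m + 1 from by omega,
        show n + 1 + (m + 1) = n + m + 2 from by omega]
      have hp : ((n + m + 2).choose (m + 1) : ℚ) =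
          (n + m + 1).choose (m + 1) + (n + m + 1).choose m := by
        rw [show n + m + 2 = (n + m + 1) + 1 from rfl, Nat.choose_succ_succ']
        push_cast; ring
      have hk : ((n + m + 2).choose (m + 1) : ℚ) * ((n + m + 2 : ℕ) : ℚ)⁻¹ =
          ((n + m + 1).choose m : ℚ) * ((m + 1 : ℕ) : ℚ)⁻¹ := by
        have hq : ((n + m + 2 : ℕ) : ℚ) * ((n + m + 1).choose m : ℚ)
            = ((n + m + 2).choose (m + 1) : ℚ) * ((m + 1 : ℕ) : ℚ) := by
          exact_mod_cast congrArg (Nat.cast : ℕ → ℚ) (Nat.add_one_mul_choose_eq (n + m + 1) m)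
        have hx : ((n + m + 2 : ℕ) : ℚ) ≠ 0 := by positivity
        have hy : ((m + 1 : ℕ) : ℚ) ≠ 0 := by positivity
        field_simp
        push_cast at hq ⊢
        linarith [hq]
      rw [show harmonic (n + m + 2) = harmonic (n + m + 1) + ((n + m + 2 : ℕ) : ℚ)⁻¹ from
        harmonic_succ _,
        show harmonic (m + 1) = harmonic m + ((m + 1 : ℕ) : ℚ)⁻¹ from harmonic_succ _]
      push_cast at hp hk ⊢
      linear_combination (harmonic m + ((m : ℚ) + 1)⁻¹ - harmonic (n + m + 1)) * hp - hk
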